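/- arXiv:1907.03837 — 6 statements merged into one kernel-verified Lean document; each statement's English description precedes it below -/
import Mathlib

section
/- Let C be a category with pullbacks and L_• a reflective subfibration on C. For a map f : X → Y in C, if α : p → q is an L_X-equivalence in C/X, then the composite Σ_f(α) (the same morphism viewed in C/Y via postcomposition with f) is an L_Y-equivalence. -/
open CategoryTheory CategoryTheory.Limits

universe v u

/-- A reflective subfibration on a category `C` with pullbacks: a pullback-compatible
system of reflective subcategories `D_X ⊆ C/X`, encoded by reflectors `L X`,
units, the predicate of being local, the universal property of the reflection,
and the compatibility iso `L_Y ∘ g^* ≅ g^* ∘ L_X`. -/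
structure ReflSubfib (C : Type u) [Category.{v} C] [HasPullbacks C] where
  L : ∀ X : C, Over X ⥤ Over X
  unit : ∀ X : C, 𝟭 (Over X) ⟶ L X
  isLocal : ∀ X : C, Over X → Prop
  mem_isLocal : ∀ (X : C) (p : Over X), isLocal X ((L X).obj p)
  reflects : ∀ (X : C) (p q : Over X), isLocal X q →
    ∀ φ : p ⟶ q, ∃! ψ : (L X).obj p ⟶ q, (unit X).app p ≫ ψ = φ
  pb_compat : ∀ {X Y : C} (f : Y ⟶ X),
    Nonempty (Over.pullback f ⋙ L Y ≅ L X ⋙ Over.pullback f)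

/-- Unit naturality, in the convenient direction. -/
lemma ReflSubfib.unit_nat {C : Type u} [Category.{v} C] [HasPullbacks C]
    (R : ReflSubfib C) {X : C} {p q : Over X} (α : p ⟶ q) :
    α ≫ (R.unit X).app q = (R.unit X).app p ≫ (R.L X).map α := by
  simpa using (R.unit X).naturality α

/-- If `L α` is an iso, precomposition with `α` is bijective on maps into local objects. -/
lemma ReflSubfib.precomp_bij {C : Type u} [Category.{v} C] [HasPullbacks C]
    (R : ReflSubfib C) {X : C} {p q : Over X} (α : p ⟶ q)
    (hα : IsIso ((R.L X).map α)) (z : Over X) (hz : R.isLocal X z) :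
    Function.Bijective (fun g : q ⟶ z => α ≫ g) := by
  constructor
  · intro g₁ g₂ h
    simp only at h
    obtain ⟨ψ₁, hψ₁, u₁⟩ := R.reflects X q z hz g₁
    obtain ⟨ψ₂, hψ₂, u₂⟩ := R.reflects X q z hz g₂
    obtain ⟨φ, hφ, uφ⟩ := R.reflects X p z hz (α ≫ g₁)
    have e₁ : (R.L X).map α ≫ ψ₁ = φ := by
      apply uφ
      rw [← Category.assoc, ← R.unit_nat α, Category.assoc, hψ₁]
    have e₂ : (R.L X).map α ≫ ψ₂ = φ := by
      apply uφ
      rw [← Category.assoc, ← R.unit_nat α, Category.assoc, hψ₂, ← h]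
    have : ψ₁ = ψ₂ := by
      have := e₁.trans e₂.symm
      exact (cancel_epi ((R.L X).map α)).mp this
    rw [← hψ₁, ← hψ₂, this]
  · intro h
    obtain ⟨ψ, hψ, _⟩ := R.reflects X p z hz h
    refine ⟨(R.unit X).app q ≫ inv ((R.L X).map α) ≫ ψ, ?_⟩
    simp only [← Category.assoc]
    rw [R.unit_nat α]
    simp [hψ]

/-- Bijectivity of precomposition transfers along an isomorphism of the target. -/
lemma precomp_bij_of_iso {D : Type u} [Category.{v} D] {p q : D} (α : p ⟶ q)
    {z z' : D} (e : z ≅ z')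
    (h : Function.Bijective (fun g : q ⟶ z => α ≫ g)) :
    Function.Bijective (fun g : q ⟶ z' => α ≫ g) := by
  have key : (fun g : q ⟶ z' => α ≫ g)
      = (Iso.homCongr (Iso.refl p) e) ∘ (fun g : q ⟶ z => α ≫ g)
        ∘ (Iso.homCongr (Iso.refl q) e).symm := by
    funext g; simp [Iso.homCongr]
  rw [key]
  exact (Iso.homCongr (Iso.refl p) e).bijective.comp
    (h.comp (Iso.homCongr (Iso.refl q) e).symm.bijective)

/-- Converse: if precomposition with `β` is bijective on maps into all local objects,
then `L β` is an iso. -/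
lemma ReflSubfib.isIso_of_precomp_bij {C : Type u} [Category.{v} C] [HasPullbacks C]
    (R : ReflSubfib C) {Y : C} {a b : Over Y} (β : a ⟶ b)
    (H : ∀ z : Over Y, R.isLocal Y z → Function.Bijective (fun g : b ⟶ z => β ≫ g)) :
    IsIso ((R.L Y).map β) := by
  have hLa := R.mem_isLocal Y a
  have hLb := R.mem_isLocal Y b
  obtain ⟨h, hh⟩ := (H _ hLa).2 ((R.unit Y).app a)
  simp only at hh
  obtain ⟨ψ, hψ, _⟩ := R.reflects Y b ((R.L Y).obj a) hLa h
  refine ⟨ψ, ?_, ?_⟩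
  · obtain ⟨φ, hφ, uφ⟩ := R.reflects Y a ((R.L Y).obj a) hLa ((R.unit Y).app a)
    have e1 : (R.L Y).map β ≫ ψ = φ := by
      apply uφ
      rw [← Category.assoc, ← R.unit_nat β, Category.assoc, hψ, hh]
    have e2 : 𝟙 _ = φ := by apply uφ; simp
    rw [e1, ← e2]
  · -- first show h ≫ L β = unit b
    have hb : h ≫ (R.L Y).map β = (R.unit Y).app b := by
      apply (H _ hLb).1
      simp only [← Category.assoc, hh]
      exact (R.unit_nat β).symm
    obtain ⟨φ, hφ, uφ⟩ := R.reflects Y b ((R.L Y).obj b) hLb ((R.unit Y).app b)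
    have e1 : ψ ≫ (R.L Y).map β = φ := by
      apply uφ
      rw [← Category.assoc, hψ, hb]
    have e2 : 𝟙 _ = φ := by apply uφ; simp
    rw [e1, ← e2]

/-- If `α` is an `L_X`-equivalence in `C/X`, then `Σ_f(α)` (postcomposition with
`f : X ⟶ Y`) is an `L_Y`-equivalence. -/
theorem stmt1 {C : Type u} [Category.{v} C] [HasPullbacks C] (R : ReflSubfib C)
    {X Y : C} (f : X ⟶ Y) {p q : Over X} (α : p ⟶ q)
    (hα : IsIso ((R.L X).map α)) :
    IsIso ((R.L Y).map ((Over.map f).map α)) := by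
  obtain ⟨e⟩ := R.pb_compat f
  apply R.isIso_of_precomp_bij
  intro z hz
  -- f^* z only matters for z = L-objects, but we prove it uniformly using z ≅ …
  -- We only need z of the form (L Y).obj w; but `isIso_of_precomp_bij` asks for all
  -- local z.  Instead, we show the bijectivity for z = (R.L Y).obj w for any w, and
  -- note `isIso_of_precomp_bij` only uses such z.  To keep it simple, we handle the
  -- general local z via the retract argument: unit z is an iso when z is local.
  have unit_iso : IsIso ((R.unit Y).app z) := by
    obtain ⟨r, hr, _⟩ := R.reflects Y z z hz (𝟙 z)
    refine ⟨r, hr, ?_⟩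
    obtain ⟨φ, hφ, uφ⟩ := R.reflects Y z ((R.L Y).obj z) (R.mem_isLocal Y z)
      ((R.unit Y).app z)
    have e1 : r ≫ (R.unit Y).app z = φ := by
      apply uφ; simp only [← Category.assoc, hr]; simp
    have e2 : 𝟙 _ = φ := by apply uφ; simp
    rw [e1, ← e2]
  -- pull back: precomposition with α is bijective into (Over.pullback f).obj z
  have hpb : Function.Bijective
      (fun g : q ⟶ (Over.pullback f).obj z => α ≫ g) := by
    -- (Over.pullback f).obj z ≅ (Over.pullback f).obj ((L Y).obj z)
    --                        ≅ (L X).obj ((Over.pullback f).obj z), a local object.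
    have i1 : (Over.pullback f).obj z ≅ (Over.pullback f).obj ((R.L Y).obj z) :=
      (Over.pullback f).mapIso (asIso ((R.unit Y).app z))
    have i2 : (R.L X).obj ((Over.pullback f).obj z)
        ≅ (Over.pullback f).obj ((R.L Y).obj z) := e.app z
    exact precomp_bij_of_iso α (i2 ≪≫ i1.symm)
      (R.precomp_bij α hα _ (R.mem_isLocal X ((Over.pullback f).obj z)))
  -- transfer along the adjunction
  have adj := Over.mapPullbackAdj f
  have key : (fun g : (Over.map f).obj q ⟶ z => (Over.map f).map α ≫ g)
      = (adj.homEquiv p z).symm ∘ (fun g : q ⟶ (Over.pullback f).obj z => α ≫ g)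
        ∘ (adj.homEquiv q z) := by
    funext g
    simp only [Function.comp_apply]
    rw [← Adjunction.homEquiv_naturality_left, Equiv.symm_apply_apply]
  rw [key]
  exact (adj.homEquiv p z).symm.bijective.comp (hpb.comp (adj.homEquiv q z).bijective)
end

section
/- Let C be a locally cartesian closed category and g : Y → X a morphism. Then the pullback functor g^* : C/X → C/Y is cartesian closed: for all p, q ∈ C/X there is a natural isomorphism g^*(p^q) ≅ (g^* p)^{(g^* q)} of exponential objects in C/Y. -/
open CategoryTheory CategoryTheory.Limits

universe v u

/-!
`g^*` has the left adjoint `Σ_g = Over.map g`, so by the mate correspondence it preserves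
exponentials once the Frobenius map `Σ_g (g^* A × B) ⟶ A × Σ_g B` is invertible. Underneath,
both sides are pullbacks of `A ⟶ X` along `B ⟶ Y ⟶ X`: the target by definition of the product
in `C/X`, the source by pasting the product square in `C/Y` with the square defining `g^* A`.
-/

namespace CategoryTheory

theorem IsPullback.isIso_of_comp_fst_of_comp_snd {C : Type u} [Category.{v} C]
    {P P' W Z R : C} {fst : P ⟶ W} {snd : P ⟶ Z} {fst' : P' ⟶ W} {snd' : P' ⟶ Z}
    {f : W ⟶ R} {g : Z ⟶ R} (h : IsPullback fst snd f g) (h' : IsPullback fst' snd' f g)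
    (φ : P ⟶ P') (hfst : φ ≫ fst' = fst) (hsnd : φ ≫ snd' = snd) : IsIso φ := by
  obtain rfl : φ = (h.isoIsPullback _ _ h').hom := h'.hom_ext (by simpa) (by simpa)
  infer_instance

section Frobenius

open MonoidalCategory CartesianMonoidalCategory

variable {C D : Type*} [Category C] [Category D]
  [CartesianMonoidalCategory C] [CartesianMonoidalCategory D] {F : C ⥤ D} {L : D ⥤ C}

theorem frobeniusMorphism_app_fst (h : L ⊣ F) (A : C) (B : D) :
    (frobeniusMorphism F h A).natTrans.app B ≫ fst A (L.obj B) =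
      L.map (fst (F.obj A) B) ≫ h.counit.app A := by
  simp [frobeniusMorphism]

theorem frobeniusMorphism_app_snd (h : L ⊣ F) (A : C) (B : D) :
    (frobeniusMorphism F h A).natTrans.app B ≫ snd A (L.obj B) = L.map (snd (F.obj A) B) := by
  simp [frobeniusMorphism]

end Frobenius

namespace Over

open MonoidalCategory CartesianMonoidalCategory

variable {C : Type u} [Category.{v} C]

theorem isPullback_fst_left_snd_left {S : C} [CartesianMonoidalCategory (Over S)] (A B : Over S) :
    IsPullback (fst A B).left (snd A B).left A.hom B.hom :=
  isPullback_of_binaryFan_isLimit _ (tensorProductIsBinaryProduct A B)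

variable [HasPullbacks C] {X Y : C} (g : Y ⟶ X)
  [CartesianMonoidalCategory (Over X)] [CartesianMonoidalCategory (Over Y)]

instance isIso_frobeniusMorphism_mapPullbackAdj (A : Over X) :
    IsIso (frobeniusMorphism (pullback g) (mapPullbackAdj g) A).natTrans := by
  refine @NatIso.isIso_of_isIso_app _ _ _ _ _ _ _ fun B => ?_
  let φ := (frobeniusMorphism (pullback g) (mapPullbackAdj g) A).natTrans.app B
  have hfst := congrArg CommaMorphism.left (frobeniusMorphism_app_fst (mapPullbackAdj g) A B)
  have : IsIso φ.left :=
    ((isPullback_fst_left_snd_left ((pullback g).obj A) B).paste_horiz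
      (IsPullback.of_hasPullback A.hom g)).isIso_of_comp_fst_of_comp_snd
      (isPullback_fst_left_snd_left A ((map g).obj B)) φ.left
      (by simpa using hfst)
      (congrArg CommaMorphism.left (frobeniusMorphism_app_snd (mapPullbackAdj g) A B))
  have : IsIso ((forget X).map φ) := this
  exact isIso_of_reflects_iso φ (forget X)

end Over
end CategoryTheory

theorem stmt8_general {C : Type u} [Category.{v} C] [HasFiniteWidePullbacks C]
    {X Y : C} (g : Y ⟶ X)
    [CartesianMonoidalCategory (Over X)] [CartesianMonoidalCategory (Over Y)]
    [MonoidalClosed (Over X)] [MonoidalClosed (Over Y)]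
    (q : Over X) :
    Nonempty ((ihom q ⋙ Over.pullback g) ≅
      (Over.pullback g ⋙ ihom ((Over.pullback g).obj q))) := by
  have : PreservesLimitsOfShape (Discrete WalkingPair) (Over.pullback g) :=
    (Over.mapPullbackAdj g).rightAdjoint_preservesLimits.preservesLimitsOfShape
  have := expComparison_iso_of_frobeniusMorphism_iso (Over.pullback g) (Over.mapPullbackAdj g) q
  exact ⟨asIso (expComparison (Over.pullback g) q).natTrans⟩

/-- In a locally cartesian closed category (each slice cartesian closed, each
pullback functor having a right adjoint), the pullback functor `g^* : C/X ⥤ C/Y`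
is cartesian closed: `g^*((−)^q) ≅ (g^*(−))^{g^* q}` naturally, so in particular
`g^*(p^q) ≅ (g^* p)^{g^* q}` for all `p q : C/X`. -/
theorem stmt8 {C : Type u} [Category.{v} C] [HasFiniteWidePullbacks C]
    {X Y : C} (g : Y ⟶ X)
    [CartesianMonoidalCategory (Over X)] [CartesianMonoidalCategory (Over Y)]
    [MonoidalClosed (Over X)] [MonoidalClosed (Over Y)]
    (hPi : ∀ ⦃A B : C⦄ (f : A ⟶ B), (Over.pullback f).IsLeftAdjoint)
    (q : Over X) :
    Nonempty ((ihom q ⋙ Over.pullback g) ≅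
      (Over.pullback g ⋙ ihom ((Over.pullback g).obj q))) :=
  stmt8_general g q
end

section
/- (Beck–Chevalley condition) Let C be a locally cartesian closed category and let the square with h : D → C, k : D → A, f : C → B, g : A → B (f∘h = g∘k) be a pullback. Then the canonical natural transformations Σ_k ∘ h^* → g^* ∘ Σ_f and f^* ∘ Π_g → Π_h ∘ k^* are natural isomorphisms. -/
/-!
Pulling `x ⟶ C₀` back along `h` and then composing with `k` pastes the pullback square of `x`
along `h` onto the given square, so by the pasting lemma it is the pullback of `x ⟶ C₀ ⟶ B`
along `g`; this gives `Σ_k h^* ≅ g^* Σ_f`. The composites `Σ_k h^*` and `g^* Σ_f` are left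
adjoint to `Π_h k^*` and `f^* Π_g`, so the conjugate of this isomorphism is the second one.
-/

open CategoryTheory CategoryTheory.Limits

universe v u

namespace CategoryTheory.IsPullback

variable {C : Type u} [Category.{v} C] [HasPullbacks C]
  {A B C₀ D : C} {h : D ⟶ C₀} {k : D ⟶ A} {f : C₀ ⟶ B} {g : A ⟶ B}

lemma paste_pullback (sq : IsPullback h k f g) (x : Over C₀) :
    IsPullback (pullback.fst x.hom h) (pullback.snd x.hom h ≫ k) (x.hom ≫ f) g :=
  (IsPullback.of_hasPullback x.hom h).paste_vert sq

noncomputable def overMapPullbackIso (sq : IsPullback h k f g) :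
    Over.pullback h ⋙ Over.map k ≅ Over.map f ⋙ Over.pullback g :=
  NatIso.ofComponents
    (fun x => Over.isoMk (sq.paste_pullback x).isoPullback
      (sq.paste_pullback x).isoPullback_hom_snd)
    (fun u => by
      ext
      apply pullback.hom_ext <;>
        simp only [Functor.comp_obj, Over.map_obj_left, Over.pullback_obj_left, Over.map_obj_hom,
          Functor.comp_map, Over.comp_left, Over.map_map_left, Over.pullback_map_left,
          Over.isoMk_hom_left, Category.assoc, IsPullback.isoPullback_hom_fst,
          IsPullback.isoPullback_hom_snd]
      -- `erw`: `pullback ((Over.map f).obj y).hom g` is `pullback (y.hom ≫ f) g` only up to defeq.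
      · erw [pullback.lift_fst, pullback.lift_fst, IsPullback.isoPullback_hom_fst_assoc]
      · erw [pullback.lift_snd_assoc, pullback.lift_snd, IsPullback.isoPullback_hom_snd])

noncomputable def pushforwardPullbackIso (sq : IsPullback h k f g)
    {Pi_g : Over A ⥤ Over B} {Pi_h : Over D ⥤ Over C₀}
    (adj_g : Over.pullback g ⊣ Pi_g) (adj_h : Over.pullback h ⊣ Pi_h) :
    Pi_g ⋙ Over.pullback f ≅ Over.pullback k ⋙ Pi_h :=
  conjugateIsoEquiv ((Over.mapPullbackAdj f).comp adj_g) (adj_h.comp (Over.mapPullbackAdj k))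
    sq.overMapPullbackIso

end CategoryTheory.IsPullback

/-- Beck–Chevalley: for a pullback square `h : D ⟶ C₀`, `k : D ⟶ A`, `f : C₀ ⟶ B`,
`g : A ⟶ B`, the canonical transformations `Σ_k ∘ h^* ⟶ g^* ∘ Σ_f` and
`f^* ∘ Π_g ⟶ Π_h ∘ k^*` are natural isomorphisms. -/
theorem stmt9 {C : Type u} [Category.{v} C] [HasPullbacks C]
    {A B C₀ D : C} (h : D ⟶ C₀) (k : D ⟶ A) (f : C₀ ⟶ B) (g : A ⟶ B)
    (sq : IsPullback h k f g)
    (Pig : Over A ⥤ Over B) (Pih : Over D ⥤ Over C₀)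
    (adjg : Over.pullback g ⊣ Pig) (adjh : Over.pullback h ⊣ Pih) :
    Nonempty ((Over.pullback h ⋙ Over.map k) ≅ (Over.map f ⋙ Over.pullback g)) ∧
    Nonempty ((Pig ⋙ Over.pullback f) ≅ (Over.pullback k ⋙ Pih)) :=
  ⟨⟨sq.overMapPullbackIso⟩, ⟨sq.pushforwardPullbackIso adjg adjh⟩⟩
end

section
/- (Function extensionality, categorically) Let C be a locally cartesian closed category with finite products, and A, X objects. Let ev : A^X × X → A be the evaluation map, and let ev₁, ev₂ : A^X × A^X × X → A be the two evaluations. Form the pullback Q of ΔA : A → A × A along (ev₁, ev₂) : A^X × A^X × X → A × A, viewed as an object q over A^X × A^X × X. Let pr : A^X × A^X × X → A^X × A^X be the projection. Then there is a canonical isomorphism Δ(A^X) ≅ Π_pr(q) in C/(A^X × A^X). -/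
open CategoryTheory CategoryTheory.Limits MonoidalCategory CartesianMonoidalCategory CartesianClosed

attribute [local instance] BraidedCategory.ofCartesianMonoidalCategory

universe v u

/-! Both `Δ(A^X)` and `Π_pr q` are subobjects of `A^X × A^X` (the latter because `q` is the
pullback of a mono and maps into `Π_pr q` correspond to maps into `q`), so it suffices that they
have the same generalized elements. A map `u : Z ⟶ A^X × A^X` factors through the diagonal iff
its two components agree; it factors through `Π_pr q` iff `pr^* u`, equivalently `u × X`,
equalizes the two evaluations; and by the universal property of `A^X` these conditions
coincide. -/

namespace CategoryTheory

section

variable {C : Type u} [Category.{v} C]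

lemma nonempty_iso_of_nonempty_hom_iff {s t : C} [Subsingleton (s ⟶ s)] [Subsingleton (t ⟶ t)]
    (h : ∀ Z, Nonempty (Z ⟶ s) ↔ Nonempty (Z ⟶ t)) : Nonempty (s ≅ t) := by
  obtain ⟨f⟩ := (h s).mp ⟨𝟙 s⟩
  obtain ⟨g⟩ := (h t).mpr ⟨𝟙 t⟩
  exact ⟨⟨f, g, Subsingleton.elim _ _, Subsingleton.elim _ _⟩⟩

instance Over.subsingleton_hom_mk_of_mono {B Y : C} (Z : Over B) (m : Y ⟶ B) [Mono m] :
    Subsingleton (Z ⟶ Over.mk m) :=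
  ⟨fun a b => Over.OverMorphism.ext <| (cancel_mono m).mp ((Over.w a).trans (Over.w b).symm)⟩

lemma Over.nonempty_hom_mk_iff {B Y : C} (Z : Over B) (m : Y ⟶ B) :
    Nonempty (Z ⟶ Over.mk m) ↔ ∃ k, k ≫ m = Z.hom :=
  ⟨fun ⟨f⟩ => ⟨f.left, Over.w f⟩, fun ⟨k, hk⟩ => ⟨Over.homMk k hk⟩⟩

lemma Over.nonempty_hom_mk_pullback_snd_iff [HasPullbacks C] {B Y W : C} (Z : Over B)
    (m : Y ⟶ W) (f : B ⟶ W) :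
    Nonempty (Z ⟶ Over.mk (pullback.snd m f)) ↔ ∃ k, k ≫ m = Z.hom ≫ f := by
  rw [Over.nonempty_hom_mk_iff]
  constructor
  · rintro ⟨k, hk⟩
    exact ⟨k ≫ pullback.fst m f, by rw [← hk, Category.assoc, Category.assoc, pullback.condition]⟩
  · rintro ⟨k, hk⟩
    exact ⟨pullback.lift k Z.hom hk, pullback.lift_snd _ _ _⟩

end

section

variable {C : Type u} [Category.{v} C] [CartesianMonoidalCategory C]

lemma CartesianMonoidalCategory.exists_comp_lift_id_id_eq_iff {A Y : C} (u : Y ⟶ A ⊗ A) :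
    (∃ k, k ≫ lift (𝟙 A) (𝟙 A) = u) ↔ u ≫ fst A A = u ≫ snd A A := by
  constructor
  · rintro ⟨k, rfl⟩
    simp
  · intro h
    exact ⟨u ≫ fst A A, by ext <;> simp [h]⟩

lemma Over.nonempty_hom_mk_pullback_snd_lift_id_id_iff [HasPullbacks C] {A B : C}
    (Z : Over B) (f g : B ⟶ A) :
    Nonempty (Z ⟶ Over.mk (pullback.snd (lift (𝟙 A) (𝟙 A)) (lift f g))) ↔
      Z.hom ≫ f = Z.hom ≫ g := by
  rw [Over.nonempty_hom_mk_pullback_snd_iff, exists_comp_lift_id_id_eq_iff]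
  simp

/-- The pullback of `z` along `fst B X` is `z ▷ X`, up to isomorphism of the source. -/
lemma CartesianMonoidalCategory.pullback_snd_fst_comp_eq_comp_iff {B X Y W : C} (z : Y ⟶ B)
    [HasPullback z (fst B X)] (f g : B ⊗ X ⟶ W) :
    pullback.snd z (fst B X) ≫ f = pullback.snd z (fst B X) ≫ g ↔ z ▷ X ≫ f = z ▷ X ≫ g := by
  have hsnd : pullback.snd z (fst B X) =
      lift (pullback.fst z (fst B X)) (pullback.snd z (fst B X) ≫ snd B X) ≫ z ▷ X := by
    ext <;> simp [← pullback.condition]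
  have hwhisker : z ▷ X =
      pullback.lift (fst Y X) (z ▷ X) (by simp) ≫ pullback.snd z (fst B X) :=
    (pullback.lift_snd _ _ _).symm
  constructor
  · intro h
    rw [hwhisker, Category.assoc, Category.assoc, h]
  · intro h
    rw [hsnd, Category.assoc, Category.assoc, h]

lemma MonoidalClosed.whiskerRight_braiding_ev_eq_iff [MonoidalClosed C] {A X Y : C}
    (a b : Y ⟶ X ⟹ A) :
    a ▷ X ≫ (β_ _ X).hom ≫ (ihom.ev X).app A = b ▷ X ≫ (β_ _ X).hom ≫ (ihom.ev X).app A ↔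
      a = b := by
  refine ⟨fun h => ?_, fun h => h ▸ rfl⟩
  apply MonoidalClosed.uncurry_injective
  rw [MonoidalClosed.uncurry_eq, MonoidalClosed.uncurry_eq, ← cancel_epi (β_ Y X).hom]
  simpa only [BraidedCategory.braiding_naturality_left_assoc] using h

end

end CategoryTheory

/-- Function extensionality, categorically: for objects `A X` of a locally cartesian
closed category, the diagonal of `A^X` is canonically isomorphic, in
`C/(A^X × A^X)`, to the dependent product along the projection
`pr : A^X × A^X × X ⟶ A^X × A^X` of the pullback `q` of `ΔA` along the double
evaluation `(ev₁, ev₂) : A^X × A^X × X ⟶ A × A`. -/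
theorem stmt10 {C : Type u} [Category.{v} C] [CartesianMonoidalCategory C]
    [HasPullbacks C] [MonoidalClosed C] (A X : C)
    (Ppr : Over (((X ⟹ A) ⊗ (X ⟹ A)) ⊗ X) ⥤ Over ((X ⟹ A) ⊗ (X ⟹ A)))
    (adj : Over.pullback
        (fst ((X ⟹ A) ⊗ (X ⟹ A)) X) ⊣ Ppr) :
    Nonempty (Over.mk (lift (𝟙 (X ⟹ A)) (𝟙 (X ⟹ A))) ≅
      Ppr.obj (Over.mk (pullback.snd (lift (𝟙 A) (𝟙 A))
        (lift
          ((fst (X ⟹ A) (X ⟹ A)) ▷ X ≫ (β_ (X ⟹ A) X).hom ≫ (ihom.ev X).app A)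
          ((snd (X ⟹ A) (X ⟹ A)) ▷ X ≫ (β_ (X ⟹ A) X).hom ≫ (ihom.ev X).app A))))) := by
  refine @nonempty_iso_of_nonempty_hom_iff _ _ _ _ _ (adj.homEquiv _ _).symm.subsingleton
    fun Z => ?_
  rw [Over.nonempty_hom_mk_iff, exists_comp_lift_id_id_eq_iff, ← (adj.homEquiv Z _).nonempty_congr,
    Over.nonempty_hom_mk_pullback_snd_lift_id_id_iff]
  refine Iff.trans ?_ (pullback_snd_fst_comp_eq_comp_iff Z.hom _ _).symm
  rw [← comp_whiskerRight_assoc, ← comp_whiskerRight_assoc,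
    MonoidalClosed.whiskerRight_braiding_ev_eq_iff]
end

section
/- (Dependent function extensionality) Let C be a locally cartesian closed category and p : E → X a morphism. Let π : (Π_X p) × X → X be the projection and ε : (Π_X p) × X → E the counit of (−) × X ⊣ Π_X at p. Form the pullback Q' of Δp : E → E ×_X E along the map (ε₁, ε₂) : (Π_X p) × (Π_X p) × X → E ×_X E induced by the counit on each factor, giving an object q' over (Π_X p) × (Π_X p) × X. Let pr be the projection to (Π_X p) × (Π_X p). Then Δ(Π_X p) ≅ Π_pr(q') canonically in C/((Π_X p) × (Π_X p)). -/
/-!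
Both sides are subterminal in `C / (Π_X p × Π_X p)`: the diagonal is a mono, and `Π_pr`, being a
right adjoint, preserves the mono `Q' ⟶ (Π_X p × Π_X p) × X`. So it suffices that an object
`a = (a₁, a₂) : A ⟶ Π_X p × Π_X p` maps into one iff it maps into the other. By `pr* ⊣ Π_pr`,
`A` maps into `Π_pr Q'` iff `(a × X) ≫ (ε₁, ε₂)` factors through `Δp`, i.e.
`(a₁ × X) ≫ ε = (a₂ × X) ≫ ε`; transposing along `(−) × X ⊣ Π_X`, this says `a₁ = a₂`, i.e. that
`A` maps into the diagonal.
-/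

open CategoryTheory CategoryTheory.Limits MonoidalCategory CartesianMonoidalCategory

universe v u

/-- The functor `(−) × X : C ⥤ C/X`, left adjoint to the dependent product `Π_X`. -/
@[simps]
def timesOver {C : Type u} [Category.{v} C] [CartesianMonoidalCategory C] (X : C) :
    C ⥤ Over X where
  obj Z := Over.mk (snd Z X)
  map {Z W} f := Over.homMk (f ▷ X) (by simp)

namespace CategoryTheory

variable {C : Type u} [Category.{v} C]

lemma Over.subsingleton_hom_mk_of_mono_s11 {S Y : C} (A : Over S) (f : Y ⟶ S) [Mono f] :
    Subsingleton (A ⟶ Over.mk f) :=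
  ⟨fun a b => Over.OverMorphism.ext ((cancel_mono f).1 ((Over.w a).trans (Over.w b).symm))⟩

lemma nonempty_iso_of_nonempty_hom_iff_s11 {L R : C} [∀ A, Subsingleton (A ⟶ L)]
    [∀ A, Subsingleton (A ⟶ R)] (h : ∀ A, Nonempty (A ⟶ L) ↔ Nonempty (A ⟶ R)) :
    Nonempty (L ≅ R) := by
  obtain ⟨f⟩ := (h L).1 ⟨𝟙 L⟩
  obtain ⟨g⟩ := (h R).2 ⟨𝟙 R⟩
  exact ⟨⟨f, g, Subsingleton.elim _ _, Subsingleton.elim _ _⟩⟩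

lemma Adjunction.subsingleton_hom_obj {D : Type*} [Category D] {F : C ⥤ D} {G : D ⥤ C}
    (adj : F ⊣ G) (T : D) [∀ A, Subsingleton (F.obj A ⟶ T)] (A : C) :
    Subsingleton (A ⟶ G.obj T) :=
  (adj.homEquiv A T).symm.subsingleton

section Pullbacks

variable [HasPullbacks C]

lemma Over.nonempty_hom_mk_pullbackSnd_iff {S U V : C} (f : U ⟶ V) (g : S ⟶ V) (B : Over S) :
    Nonempty (B ⟶ Over.mk (pullback.snd f g)) ↔ ∃ h, h ≫ f = B.hom ≫ g := by
  constructor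
  · rintro ⟨b⟩
    refine ⟨b.left ≫ pullback.fst f g, ?_⟩
    rw [Category.assoc, pullback.condition, ← Over.w b, Category.assoc]
    rfl
  · rintro ⟨h, hh⟩
    exact ⟨Over.homMk (pullback.lift h B.hom hh) (pullback.lift_snd _ _ _)⟩

lemma Limits.pullback.exists_comp_diagonal_eq_iff {E X Z : C} (p : E ⟶ X) (k : Z ⟶ pullback p p) :
    (∃ h, h ≫ pullback.diagonal p = k) ↔ k ≫ pullback.fst p p = k ≫ pullback.snd p p := by
  constructor
  · rintro ⟨h, rfl⟩
    simp
  · intro hk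
    exact ⟨k ≫ pullback.fst p p, pullback.hom_ext (by simp) (by simp [hk])⟩

end Pullbacks

section Cartesian

variable [CartesianMonoidalCategory C]

lemma nonempty_hom_mk_diag_iff {Y : C} (A : Over (Y ⊗ Y)) :
    Nonempty (A ⟶ Over.mk (lift (𝟙 Y) (𝟙 Y))) ↔ A.hom ≫ fst Y Y = A.hom ≫ snd Y Y := by
  constructor
  · rintro ⟨a⟩
    rw [← Over.w a]
    simp
  · intro hA
    exact ⟨Over.homMk (A.hom ≫ fst Y Y) (hom_ext _ _ (by simp) (by simp [hA]))⟩

lemma timesOver_homEquiv_symm_left {X G : C} {PX : Over X ⥤ C} (adj : timesOver X ⊣ PX)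
    (p : Over X) (h : G ⟶ PX.obj p) :
    ((adj.homEquiv G p).symm h).left = h ▷ X ≫ (adj.counit.app p).left := by
  rw [Adjunction.homEquiv_counit]
  rfl

lemma whiskerRight_comp_counit_injective {X G : C} {PX : Over X ⥤ C} (adj : timesOver X ⊣ PX)
    (p : Over X) {h₁ h₂ : G ⟶ PX.obj p}
    (hh : h₁ ▷ X ≫ (adj.counit.app p).left = h₂ ▷ X ≫ (adj.counit.app p).left) : h₁ = h₂ :=
  (adj.homEquiv G p).symm.injective
    (Over.OverMorphism.ext (by rw [timesOver_homEquiv_symm_left, timesOver_homEquiv_symm_left, hh]))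

variable [HasPullbacks C]

-- `pullback.snd f (fst B X)` and `f ▷ X` factor through each other.
lemma pullbackSnd_fst_comp_eq_iff {A B X Y : C} (f : A ⟶ B) (φ ψ : B ⊗ X ⟶ Y) :
    pullback.snd f (fst B X) ≫ φ = pullback.snd f (fst B X) ≫ ψ ↔ f ▷ X ≫ φ = f ▷ X ≫ ψ := by
  have h₁ : pullback.lift (fst A X) (f ▷ X) (by simp) ≫ pullback.snd f (fst B X) = f ▷ X :=
    pullback.lift_snd _ _ _
  have h₂ : lift (pullback.fst f (fst B X)) (pullback.snd f (fst B X) ≫ snd B X) ≫ f ▷ X =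
      pullback.snd f (fst B X) :=
    hom_ext _ _ (by simp [pullback.condition]) (by simp)
  constructor
  · intro h
    rw [← h₁, Category.assoc, Category.assoc, h]
  · intro h
    rw [← h₂, Category.assoc, Category.assoc, h]

end Cartesian

end CategoryTheory

/-- Dependent function extensionality: for `p : E ⟶ X`, the diagonal of the object
of sections `Π_X p` is canonically isomorphic, over `(Π_X p) × (Π_X p)`, to the
dependent product along the projection of the pullback of the relative diagonal
`Δp` along the double counit `(ε₁, ε₂) : (Π_X p) × (Π_X p) × X ⟶ E ×_X E`
(given here as the map `m` with its two defining component equations). -/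
theorem stmt11 {C : Type u} [Category.{v} C] [CartesianMonoidalCategory C] [HasPullbacks C]
    {X : C} (p : Over X)
    (PX : Over X ⥤ C) (adjX : timesOver X ⊣ PX)
    (m : (PX.obj p ⊗ PX.obj p) ⊗ X ⟶ pullback p.hom p.hom)
    (hm1 : m ≫ pullback.fst p.hom p.hom =
      (fst (PX.obj p) (PX.obj p)) ▷ X ≫ (adjX.counit.app p).left)
    (hm2 : m ≫ pullback.snd p.hom p.hom =
      (snd (PX.obj p) (PX.obj p)) ▷ X ≫ (adjX.counit.app p).left)
    (Ppr : Over ((PX.obj p ⊗ PX.obj p) ⊗ X) ⥤ Over (PX.obj p ⊗ PX.obj p))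
    (adjpr : Over.pullback (fst (PX.obj p ⊗ PX.obj p) X) ⊣ Ppr) :
    Nonempty (Over.mk (lift (𝟙 (PX.obj p)) (𝟙 (PX.obj p))) ≅
      Ppr.obj (Over.mk (pullback.snd (pullback.diagonal p.hom) m))) := by
  have : Mono (lift (𝟙 (PX.obj p)) (𝟙 (PX.obj p))) := mono_of_mono_fac (lift_fst _ _)
  have : ∀ A, Subsingleton (A ⟶ Over.mk (lift (𝟙 (PX.obj p)) (𝟙 (PX.obj p)))) :=
    fun A => Over.subsingleton_hom_mk_of_mono_s11 A _
  have : ∀ B, Subsingleton (B ⟶ Over.mk (pullback.snd (pullback.diagonal p.hom) m)) :=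
    fun B => Over.subsingleton_hom_mk_of_mono_s11 B _
  have := adjpr.subsingleton_hom_obj (Over.mk (pullback.snd (pullback.diagonal p.hom) m))
  refine nonempty_iso_of_nonempty_hom_iff_s11 fun A => ?_
  rw [nonempty_hom_mk_diag_iff, ← (adjpr.homEquiv A _).nonempty_congr,
    Over.nonempty_hom_mk_pullbackSnd_iff, pullback.exists_comp_diagonal_eq_iff,
    Category.assoc, Category.assoc, hm1, hm2]
  refine Iff.trans ?_ (pullbackSnd_fst_comp_eq_iff A.hom _ _).symm
  -- `erw`: the counit's domain is `((PX ⋙ timesOver X).obj p).left`, only defeq to `PX.obj p ⊗ X`.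
  erw [← comp_whiskerRight_assoc, ← comp_whiskerRight_assoc]
  exact ⟨fun h => by rw [h], whiskerRight_comp_counit_injective adjX p⟩
end

section
/- Let C be a locally cartesian closed category and t : E → X a morphism. Form X × t : X × E → X × X as the pullback of t along the second projection pr₂ : X × X → X. Then the map (t, id) : E → X × E, viewed as a morphism (ΔX)∘t → X × t in C/(X × X), induces by adjunction an isomorphism β : t ≅ Π_{pr₁}((X × t)^{ΔX}) in C/X, where pr₁ : X × X → X is the first projection and (X × t)^{ΔX} is the exponential in C/(X×X) with base the diagonal ΔX viewed as an object over X × X. -/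
open CategoryTheory CategoryTheory.Limits MonoidalCategory CartesianMonoidalCategory

open scoped CartesianClosed

universe v u

/-!
Since `Δ` is a section of `pr₁`, the functor `Σ_Δ` factors as `(ΔX × -) ∘ pr₁*`: indeed
`ΔX × A ≅ Σ_Δ Δ* A` and `Δ* pr₁* ≅ id`. Passing to right adjoints gives
`Δ* ≅ Π_{pr₁} ∘ (-)^{ΔX}`, and evaluating at `X × t` yields the claim, because `(t, id)`
exhibits `t` as the pullback of `X × t` along `Δ`.
-/

namespace CategoryTheory

variable {C : Type u} [Category.{v} C]

section Cartesian

variable [CartesianMonoidalCategory C]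

lemma isPullback_snd_whiskerLeft (X : C) {E Y : C} (t : E ⟶ Y) :
    IsPullback (snd X E) (X ◁ t) t (snd X Y) :=
  let _ := ChosenPullbacksAlong.cartesianMonoidalCategorySnd X Y
  ChosenPullbacksAlong.isPullback t (snd X Y)

lemma isPullback_lift_whiskerLeft_diag {E X : C} (t : E ⟶ X) :
    IsPullback (lift t (𝟙 E)) t (X ◁ t) (lift (𝟙 X) (𝟙 X)) :=
  IsPullback.of_right (by simpa using IsPullback.id_horiz t) (by ext <;> simp)
    (isPullback_snd_whiskerLeft X t)

end Cartesian

namespace Over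

variable [HasPullbacks C]

noncomputable def isoPullbackObjOfIsPullback {P Z W Y : C} {fst : P ⟶ Z} {snd : P ⟶ W}
    {g : Z ⟶ Y} {s : W ⟶ Y} (h : IsPullback fst snd g s) :
    Over.mk snd ≅ (Over.pullback s).obj (Over.mk g) :=
  Over.isoMk h.isoPullback h.isoPullback_hom_snd

variable {W Y : C} [CartesianMonoidalCategory (Over Y)]

noncomputable def mapPullbackObjIsoTensor (f : W ⟶ Y) (A : Over Y) :
    (Over.map f).obj ((Over.pullback f).obj A) ≅ Over.mk f ⊗ A :=
  (IsPullback.of_hasPullback A.hom f).flip.isLimit.pullbackConeEquivBinaryFanFunctor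
    |>.conePointUniqueUpToIso (tensorProductIsBinaryProduct _ _)

lemma mapPullbackObjIsoTensor_hom_fst (f : W ⟶ Y) (A : Over Y) :
    (mapPullbackObjIsoTensor f A).hom ≫ fst _ _ = Over.homMk (pullback.snd A.hom f) :=
  IsLimit.conePointUniqueUpToIso_hom_comp _ _ (⟨.left⟩ : Discrete WalkingPair)

lemma mapPullbackObjIsoTensor_hom_snd (f : W ⟶ Y) (A : Over Y) :
    (mapPullbackObjIsoTensor f A).hom ≫ snd _ _ =
      Over.homMk (pullback.fst A.hom f) pullback.condition :=
  IsLimit.conePointUniqueUpToIso_hom_comp _ _ (⟨.right⟩ : Discrete WalkingPair)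

lemma mapPullbackObjIsoTensor_hom_naturality (f : W ⟶ Y) {A B : Over Y} (h : A ⟶ B) :
    (Over.map f).map ((Over.pullback f).map h) ≫ (mapPullbackObjIsoTensor f B).hom =
      (mapPullbackObjIsoTensor f A).hom ≫ (Over.mk f ◁ h) := by
  apply CartesianMonoidalCategory.hom_ext
  · rw [Category.assoc, Category.assoc, whiskerLeft_fst, mapPullbackObjIsoTensor_hom_fst,
      mapPullbackObjIsoTensor_hom_fst]
    exact Over.OverMorphism.ext (pullback.lift_snd _ _ _)
  · rw [Category.assoc, Category.assoc, whiskerLeft_snd, mapPullbackObjIsoTensor_hom_snd,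
      ← Category.assoc, mapPullbackObjIsoTensor_hom_snd]
    exact Over.OverMorphism.ext (pullback.lift_fst _ _ _)

noncomputable def pullbackCompMapIsoTensorLeft (f : W ⟶ Y) :
    Over.pullback f ⋙ Over.map f ≅ tensorLeft (Over.mk f) :=
  NatIso.ofComponents (mapPullbackObjIsoTensor f) (mapPullbackObjIsoTensor_hom_naturality f)

noncomputable def mapIsoPullbackCompTensorLeft {s : W ⟶ Y} {p : Y ⟶ W} (hs : s ≫ p = 𝟙 W) :
    Over.map s ≅ Over.pullback p ⋙ tensorLeft (Over.mk s) :=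
  (Functor.leftUnitor _).symm ≪≫
    Functor.isoWhiskerRight
      (Over.pullbackId.symm ≪≫ eqToIso (by simp only [hs]) ≪≫ Over.pullbackComp s p) (Over.map s) ≪≫
    Functor.associator _ _ _ ≪≫ Functor.isoWhiskerLeft _ (pullbackCompMapIsoTensorLeft s)

noncomputable def pullbackIsoIhomCompOfSection [MonoidalClosed (Over Y)] {s : W ⟶ Y}
    {p : Y ⟶ W} (hs : s ≫ p = 𝟙 W) {Pi : Over Y ⥤ Over W} (adj : Over.pullback p ⊣ Pi) :
    Over.pullback s ≅ ihom (Over.mk s) ⋙ Pi :=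
  (Over.mapPullbackAdj s).rightAdjointUniq
    ((adj.comp (ihom.adjunction _)).ofNatIsoLeft (mapIsoPullbackCompTensorLeft hs).symm)

end Over

end CategoryTheory

/-- Internal Yoneda lemma: for `t : E ⟶ X` in a locally cartesian closed category,
the map `(t, id) : (ΔX) ∘ t ⟶ X × t` in `C/(X × X)` induces by adjunction an
isomorphism `β : t ≅ Π_{pr₁} ((X × t)^{ΔX})` in `C/X`, where `X × t = X ◁ t` is
the pullback of `t` along `pr₂` and the exponential is taken in `C/(X × X)`. -/
theorem stmt19 {C : Type u} [Category.{v} C] [CartesianMonoidalCategory C] [HasPullbacks C]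
    {E X : C} (t : E ⟶ X)
    [CartesianMonoidalCategory (Over (X ⊗ X))] [MonoidalClosed (Over (X ⊗ X))]
    (Ppr : Over (X ⊗ X) ⥤ Over X)
    (adj : Over.pullback (fst X X) ⊣ Ppr) :
    Nonempty (Over.mk t ≅
      Ppr.obj ((Over.mk (lift (𝟙 X) (𝟙 X))) ⟹ (Over.mk (X ◁ t)))) :=
  ⟨Over.isoPullbackObjOfIsPullback (isPullback_lift_whiskerLeft_diag t) ≪≫
    (Over.pullbackIsoIhomCompOfSection (lift_fst _ _) adj).app (Over.mk (X ◁ t))⟩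
end
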